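/- For every x̄ ∈ X_*, the twisting functor T_{x̄} : F_{x̄} → F^Γ_{x̄} and the untwisting functor U_{x̄} : F^Γ_{x̄} → F_{x̄} are mutually inverse isomorphisms of categories; that is, U_{x̄} ∘ T_{x̄} is the identity functor on F_{x̄} and T_{x̄} ∘ U_{x̄} is the identity functor on F^Γ_{x̄}. -/

import Mathlib

set_option linter.unusedSectionVars false

open scoped TensorProduct

noncomputable section

/-- The action of a group element on the maximal spectrum of `A`
(so that `m_{γ·x} = comap (γ⁻¹ • ·) m_x`). -/
def gammaDot (A Γ : Type*) [CommRing A] [Group Γ] [MulSemiringAction Γ A]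
    (γ : Γ) (x : MaximalSpectrum A) : MaximalSpectrum A :=
  ⟨Ideal.comap (MulSemiringAction.toRingHom Γ A γ⁻¹) x.asIdeal, by
    have := x.isMaximal
    exact Ideal.comap_isMaximal_of_surjective _ (MulAction.surjective γ⁻¹)⟩

/-- A finite set of points of `X` containing no two (distinct) points in the same
`Γ`-orbit, i.e. an element of `X_*`. -/
def NoTwoInOrbit (A Γ : Type*) [CommRing A] [Group Γ] [MulSemiringAction Γ A]
    (s : Finset (MaximalSpectrum A)) : Prop :=
  ∀ x ∈ s, ∀ y ∈ s, ∀ γ : Γ, gammaDot A Γ γ x = y → x = y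

/-- The ideal `I_η = ∏_{x ∈ Supp η} m_x ^ η x` of `A`. -/
def idealOf {A : Type*} [CommRing A] (η : MaximalSpectrum A →₀ ℕ) : Ideal A :=
  η.support.prod fun x => x.asIdeal ^ η x

universe u1 u2 u3 u4

variable (k : Type u1) (A : Type u2) (g : Type u3) (Γ : Type u4)
variable [Field k] [IsAlgClosed k] [CharZero k]
variable [CommRing A] [Algebra k A] [Algebra.FiniteType k A]
variable [LieRing g] [LieAlgebra k g] [Module.Finite k g] [LieAlgebra.IsSemisimple k g]
variable [CommGroup Γ] [Fintype Γ]
variable [MulSemiringAction Γ A] [SMulCommClass Γ k A]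
variable [DistribMulAction Γ g] [SMulCommClass Γ k g]

/-- The `k`-submodule `g ⊗ I` of `A ⊗[k] g` determined by an ideal `I ⊆ A`. -/
def gT (I : Ideal A) : Submodule k (A ⊗[k] g) :=
  Submodule.span k {z | ∃ f ∈ I, ∃ v : g, z = f ⊗ₜ[k] v}

/-- The diagonal action of `γ ∈ Γ` on `A ⊗[k] g` as a `k`-linear map. -/
def diagMap (γ : Γ) : (A ⊗[k] g) →ₗ[k] A ⊗[k] g :=
  TensorProduct.map (DistribMulAction.toLinearMap k A γ) (DistribMulAction.toLinearMap k g γ)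

/-- The set of `Γ`-fixed points of `A ⊗[k] g`, i.e. the equivariant map algebra
`(g ⊗ A)^Γ`, as a `k`-submodule. -/
def fixedSub : Submodule k (A ⊗[k] g) :=
  ⨅ γ : Γ, LinearMap.ker (diagMap k A g Γ γ - LinearMap.id)

lemma mem_fixedSub {z : A ⊗[k] g} :
    z ∈ fixedSub k A g Γ ↔ ∀ γ : Γ, diagMap k A g Γ γ z = z := by
  simp [fixedSub, sub_eq_zero, LinearMap.sub_apply]

/-- `A ⊗[k] g` is a Lie algebra over `k` (by restriction of scalars from `A`). -/
instance : LieAlgebra k (A ⊗[k] g) where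
  lie_smul t x y := by
    rw [← algebraMap_smul A t y, lie_smul, algebraMap_smul]

lemma diagMap_lie (hbr : ∀ (γ : Γ) (x y : g), γ • ⁅x, y⁆ = ⁅γ • x, γ • y⁆) (γ : Γ)
    (z w : A ⊗[k] g) :
    diagMap k A g Γ γ ⁅z, w⁆ = ⁅diagMap k A g Γ γ z, diagMap k A g Γ γ w⁆ := by
  induction z using TensorProduct.induction_on with
  | zero => simp
  | tmul a v =>
    induction w using TensorProduct.induction_on with
    | zero => simp
    | tmul b u =>
      rw [LieAlgebra.ExtendScalars.bracket_tmul]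
      simp only [diagMap, TensorProduct.map_tmul, DistribMulAction.toLinearMap, DistribSMul.toLinearMap_apply]
      rw [LieAlgebra.ExtendScalars.bracket_tmul, smul_mul', hbr]
    | add w1 w2 h1 h2 => rw [lie_add, map_add, h1, h2, map_add, lie_add]
  | add z1 z2 h1 h2 => rw [add_lie, map_add, h1, h2, map_add, add_lie]

/-- The equivariant map algebra `(g ⊗ A)^Γ` as a Lie subalgebra of `A ⊗[k] g`. -/
def fixedLie (hbr : ∀ (γ : Γ) (x y : g), γ • ⁅x, y⁆ = ⁅γ • x, γ • y⁆) :
    LieSubalgebra k (A ⊗[k] g) :=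
  { fixedSub k A g Γ with
    lie_mem' := by
      intro x y hx hy
      have hx' : x ∈ fixedSub k A g Γ := hx
      have hy' : y ∈ fixedSub k A g Γ := hy
      show ⁅x, y⁆ ∈ fixedSub k A g Γ
      rw [mem_fixedSub] at hx' hy' ⊢
      intro γ
      rw [diagMap_lie k A g Γ hbr, hx' γ, hy' γ] }

/-- `g ⊗ I` as a Lie ideal of `A ⊗[k] g`. -/
def gTLie (I : Ideal A) : LieIdeal k (A ⊗[k] g) :=
  { gT k A g I with
    lie_mem := by
      intro x m hm
      have hm' : m ∈ gT k A g I := hm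
      show ⁅x, m⁆ ∈ gT k A g I
      clear hm
      induction hm' using Submodule.span_induction with
      | mem z hz =>
        obtain ⟨f, hf, v, rfl⟩ := hz
        induction x using TensorProduct.induction_on with
        | zero => rw [zero_lie]; exact (gT k A g I).zero_mem
        | tmul a w =>
          rw [LieAlgebra.ExtendScalars.bracket_tmul]
          exact Submodule.subset_span ⟨a * f, I.mul_mem_left a hf, ⁅w, v⁆, rfl⟩
        | add x1 x2 h1 h2 => rw [add_lie]; exact (gT k A g I).add_mem h1 h2
      | zero => rw [lie_zero]; exact (gT k A g I).zero_mem
      | add z w _ _ h1 h2 => rw [lie_add]; exact (gT k A g I).add_mem h1 h2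
      | smul c z _ h => rw [lie_smul]; exact (gT k A g I).smul_mem c h }

variable {k A g Γ} in
/-- `(g ⊗ I)^Γ` as a Lie ideal of the equivariant map algebra `(g ⊗ A)^Γ`. -/
def fixedIdealOf (hbr : ∀ (γ : Γ) (x y : g), γ • ⁅x, y⁆ = ⁅γ • x, γ • y⁆) (I : Ideal A) :
    LieIdeal k ↥(fixedLie k A g Γ hbr) where
  carrier := {y | (y : A ⊗[k] g) ∈ gT k A g I}
  add_mem' := fun ha hb => (gT k A g I).add_mem ha hb
  zero_mem' := (gT k A g I).zero_mem
  smul_mem' := fun c y hy => by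
    simpa using (gT k A g I).smul_mem c hy
  lie_mem := fun {x m} hm => (gTLie k A g I).lie_mem hm
/-- Data of a fixed triangular decomposition `g = n⁻ ⊕ h ⊕ n⁺` of `g` together with
Chevalley generators `f_i` (`i ∈ ι`), the identification of the monoid `P⁺` of dominant
integral weights with `ι →₀ ℕ` (recording the values `λ(h_i)`), the corresponding linear
functionals on the Cartan subalgebra `h`, and the height function `ht` on weights (heights
are taken with respect to the simple roots; they are rational on the weight lattice). -/
structure TriData (k g ι : Type*) [Field k] [LieRing g] [LieAlgebra k g] where
  /-- the Cartan subalgebra `h` -/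
  hh : LieSubalgebra k g
  /-- the positive part `n⁺` -/
  np : LieSubalgebra k g
  /-- the negative part `n⁻` -/
  nm : LieSubalgebra k g
  /-- the negative Chevalley generators `f_i` -/
  fgen : ι → g
  /-- a dominant weight `λ = (λ(h_i))_i : ι →₀ ℕ` as a linear functional on `h` -/
  wt : (ι →₀ ℕ) →+ (↥hh →ₗ[k] k)
  /-- the height of a dominant weight -/
  ht : (ι →₀ ℕ) →+ ℚ
  cartan : hh.IsCartanSubalgebra
  fgen_mem : ∀ i, fgen i ∈ nm
  decomp : nm.toSubmodule ⊔ hh.toSubmodule ⊔ np.toSubmodule = ⊤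

variable {ι : Type*}

section Points

variable (k A Γ : Type*) [Field k] [CommRing A] [Algebra k A]
  [CommGroup Γ] [MulSemiringAction Γ A] [SMulCommClass Γ k A]

/-- The action of `Γ` on the rational points `X_rat`, realized as `k`-algebra
homomorphisms `A → k` (for a finitely generated algebra over an algebraically closed
field these are exactly the maximal ideals): `(γ · x)(f) = x(γ⁻¹ • f)`. -/
def cdot (γ : Γ) (x : A →ₐ[k] k) : A →ₐ[k] k :=
  x.comp (MulSemiringAction.toAlgHom k A γ⁻¹)

/-- `x̄` is a set of representatives for the `Γ`-orbits in the finite set `S` of rational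
points: it contains exactly one point from each `Γ`-orbit in `S`. -/
def OrbitReps (xbar S : Finset (A →ₐ[k] k)) : Prop :=
  (↑xbar : Set (A →ₐ[k] k)) ⊆ ↑S ∧
  (∀ s ∈ S, ∃ γ : Γ, ∃ y ∈ xbar, cdot k A Γ γ y = s) ∧
  (∀ y ∈ xbar, ∀ y' ∈ xbar, ∀ γ : Γ, cdot k A Γ γ y = y' → y = y')

/-- No two (distinct) points of `s` lie in the same `Γ`-orbit, i.e. `s ∈ X_*`. -/
def NoTwoInOrbitPt (s : Finset (A →ₐ[k] k)) : Prop :=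
  ∀ x ∈ s, ∀ y ∈ s, ∀ γ : Γ, cdot k A Γ γ x = y → x = y

/-- The ideal `I_η = ∏_{x ∈ Supp η} m_x ^ η x` of `A`, where `m_x` is the maximal ideal
corresponding to the rational point `x`. -/
def idealOfPt (η : (A →ₐ[k] k) →₀ ℕ) : Ideal A :=
  η.support.prod fun x => (RingHom.ker x) ^ η x

end Points

section Wt

variable {k A : Type*} [Field k] [CommRing A] [Algebra k A]

/-- `ψ_{x̄}`: the restriction of `ψ ∈ E` to a set of points `x̄` (extended by zero). -/
noncomputable def psiRes (ψ : (A →ₐ[k] k) →₀ (ι →₀ ℕ)) (xbar : Finset (A →ₐ[k] k)) :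
    (A →ₐ[k] k) →₀ (ι →₀ ℕ) :=
  haveI := Classical.decPred (· ∈ xbar)
  ψ.filter (· ∈ xbar)

/-- `wt ψ = ∑_x ψ(x)`, the total weight of `ψ ∈ E`. -/
def weightOf (ψ : (A →ₐ[k] k) →₀ (ι →₀ ℕ)) : ι →₀ ℕ := ψ.sum fun _ μ => μ

end Wt

/-- The action of `γ ∈ Γ` on dominant weights, induced by the action of `Γ` on the set `ι`
of nodes of the Dynkin diagram (diagram automorphisms): `(γ • λ)(h_i) = λ(h_{γ⁻¹ • i})`. -/
def pAct {Γ ι : Type*} [Group Γ] [MulAction Γ ι] (γ : Γ) (lam : ι →₀ ℕ) : ι →₀ ℕ :=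
  Finsupp.equivMapDomain (MulAction.toPerm γ) lam

universe uR uL

/-- A bundled Lie module over the Lie `R`-algebra `L`. -/
structure LMod (R : Type uR) (L : Type uL) [CommRing R] [LieRing L] [LieAlgebra R L] where
  carrier : Type (max uR uL)
  [isAddCommGroup : AddCommGroup carrier]
  [isModule : Module R carrier]
  [isLieRingModule : LieRingModule L carrier]
  [isLieModule : LieModule R L carrier]

attribute [instance] LMod.isAddCommGroup LMod.isModule LMod.isLieRingModule LMod.isLieModule

section CompSeries

variable {R L M : Type*} [CommRing R] [LieRing L] [LieAlgebra R L]
variable [AddCommGroup M] [Module R M] [LieRingModule L M] [LieModule R L M]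

/-- `F` is a chain of Lie submodules from `⊥` to `⊤` (the successive quotients are not yet
required to be irreducible; this is imposed via `FactorIso` against irreducible modules). -/
def IsCompChain (n : ℕ) (F : Fin (n + 1) → LieSubmodule R L M) : Prop :=
  Monotone F ∧ F 0 = ⊥ ∧ F (Fin.last n) = ⊤

/-- The `i`-th factor `F (i+1) / F i` of the chain `F` is isomorphic to `S`:  there is a
surjective morphism of Lie modules `F (i+1) → S` whose kernel is exactly `F i`. -/
def FactorIso (n : ℕ) (F : Fin (n + 1) → LieSubmodule R L M) (i : Fin n) (S : Type*)
    [AddCommGroup S] [Module R S] [LieRingModule L S] [LieModule R L S] : Prop :=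
  ∃ f : ↥(F i.succ) →ₗ⁅R,L⁆ S, Function.Surjective f ∧
    ∀ z : ↥(F i.succ), f z = 0 ↔ (z : M) ∈ F i.castSucc

end CompSeries

variable {ι : Type*} [Fintype ι] [MulAction Γ ι]

/-- The relations satisfied by the generator `w_ψ` of the local Weyl module `W(ψ)`:
`(n⁺ ⊗ A) ⬝ w = 0`, `(f_i ⊗ 1)^{λ(h_i)+1} ⬝ w = 0` where `λ = wt ψ`, and
`(b ⊗ f) ⬝ w = (∑_{x ∈ Supp ψ} ψ(x)(f(x) b)) w` for `b ∈ h`, `f ∈ A`. -/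
def IsWeylVec (T : TriData k g ι) (ψ : (A →ₐ[k] k) →₀ (ι →₀ ℕ)) {W : Type*}
    [AddCommGroup W] [Module k W] [LieRingModule (A ⊗[k] g) W] [LieModule k (A ⊗[k] g) W]
    (w : W) : Prop :=
  (∀ f : A, ∀ n ∈ T.np, ⁅(f ⊗ₜ[k] n : A ⊗[k] g), w⁆ = 0) ∧
  (∀ i : ι,
    (LieModule.toEnd k (A ⊗[k] g) W ((1 : A) ⊗ₜ[k] T.fgen i) ^ (weightOf ψ i + 1)) w = 0) ∧
  (∀ f : A, ∀ b : T.hh,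
    ⁅(f ⊗ₜ[k] (b : g) : A ⊗[k] g), w⁆ = (∑ x ∈ ψ.support, x f * T.wt (ψ x) b) • w)

/-- `W` is (a copy of) the local Weyl module `W(ψ)` of `g ⊗ A`:  it is generated by a
nonzero vector `w_ψ` satisfying the Weyl relations, and is universal with this property. -/
def IsWeylModule (T : TriData k g ι) (ψ : (A →ₐ[k] k) →₀ (ι →₀ ℕ)) (W : Type*)
    [AddCommGroup W] [Module k W] [LieRingModule (A ⊗[k] g) W] [LieModule k (A ⊗[k] g) W] :
    Prop :=
  ∃ w : W, w ≠ 0 ∧ IsWeylVec k A g T ψ w ∧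
    LieSubmodule.lieSpan k (A ⊗[k] g) ({w} : Set W) = ⊤ ∧
    ∀ (V : Type (max u1 u2 u3)) [AddCommGroup V] [Module k V] [LieRingModule (A ⊗[k] g) V]
      [LieModule k (A ⊗[k] g) V] (v : V), IsWeylVec k A g T ψ v →
        ∃! φ : W →ₗ⁅k,A ⊗[k] g⁆ V, φ w = v

/-- `V` is (a copy of) the irreducible evaluation module `V(ψ)` of `g ⊗ A` associated to
`ψ ∈ E`:  it is irreducible, finite-dimensional and possesses a nonzero vector satisfying
the Weyl relations for `ψ`. -/
def IsSimpleEvalMod (T : TriData k g ι) (ψ : (A →ₐ[k] k) →₀ (ι →₀ ℕ)) (V : Type*)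
    [AddCommGroup V] [Module k V] [LieRingModule (A ⊗[k] g) V] [LieModule k (A ⊗[k] g) V] :
    Prop :=
  LieModule.IsIrreducible k (A ⊗[k] g) V ∧ FiniteDimensional k V ∧
    ∃ v : V, v ≠ 0 ∧ IsWeylVec k A g T ψ v

/-- `ψ : X_rat → P⁺` is `Γ`-equivariant, i.e. `ψ ∈ E^Γ`. -/
def EquivariantE (ψ : (A →ₐ[k] k) →₀ (ι →₀ ℕ)) : Prop :=
  ∀ (γ : Γ) (x : A →ₐ[k] k), ψ (cdot k A Γ γ x) = pAct γ (ψ x)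

/-- The height of `ψ ∈ E^Γ`: the common value `∑_{x ∈ x̄} ht ψ(x)` for a set `x̄` of
`Γ`-orbit representatives of `Supp ψ` (computed here as the sum over the whole support
divided by `|Γ|`, using that `Γ` acts freely). -/
def htE (T : TriData k g ι) (ψ : (A →ₐ[k] k) →₀ (ι →₀ ℕ)) : ℚ :=
  (∑ x ∈ ψ.support, T.ht (ψ x)) / (Fintype.card Γ : ℚ)

variable {k A g Γ}

/-- `V` is (a copy of) the irreducible evaluation module `V_Γ(ψ)` of the equivariant map
algebra `(g ⊗ A)^Γ` associated to `ψ ∈ E^Γ`: the restriction to `(g ⊗ A)^Γ` of the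
irreducible evaluation module `V(ψ_{x̄})` of `g ⊗ A`, where `x̄` is a set of `Γ`-orbit
representatives of `Supp ψ`. -/
def IsSimpleEvalModΓ (hbr : ∀ (γ : Γ) (x y : g), γ • ⁅x, y⁆ = ⁅γ • x, γ • y⁆)
    (T : TriData k g ι) (ψ : (A →ₐ[k] k) →₀ (ι →₀ ℕ)) (V : Type*)
    [AddCommGroup V] [Module k V] [LieRingModule ↥(fixedLie k A g Γ hbr) V]
    [LieModule k ↥(fixedLie k A g Γ hbr) V] : Prop :=
  ∃ xbar : Finset (A →ₐ[k] k), OrbitReps k A Γ xbar ψ.support ∧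
    ∃ U : LMod k (A ⊗[k] g), IsSimpleEvalMod k A g T (psiRes ψ xbar) U.carrier ∧
      Nonempty (V ≃ₗ⁅k,↥(fixedLie k A g Γ hbr)⁆ U.carrier)

/-- `V` is (a copy of) the twisted local Weyl module `W_Γ(ψ)` of `(g ⊗ A)^Γ` for
`ψ ∈ E^Γ`: the restriction to `(g ⊗ A)^Γ` of the untwisted local Weyl module `W(ψ_{x̄})`,
where `x̄` is a set of `Γ`-orbit representatives of `Supp ψ`. -/
def IsTwistedWeylModule (hbr : ∀ (γ : Γ) (x y : g), γ • ⁅x, y⁆ = ⁅γ • x, γ • y⁆)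
    (T : TriData k g ι) (ψ : (A →ₐ[k] k) →₀ (ι →₀ ℕ)) (V : Type*)
    [AddCommGroup V] [Module k V] [LieRingModule ↥(fixedLie k A g Γ hbr) V]
    [LieModule k ↥(fixedLie k A g Γ hbr) V] : Prop :=
  ∃ xbar : Finset (A →ₐ[k] k), OrbitReps k A Γ xbar ψ.support ∧
    ∃ U : LMod k (A ⊗[k] g), IsWeylModule k A g T (psiRes ψ xbar) U.carrier ∧
      Nonempty (V ≃ₗ⁅k,↥(fixedLie k A g Γ hbr)⁆ U.carrier)

/-- The finite-dimensional `(g ⊗ A)`-module `U` lies in the subcategory `F_{x̄}`: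
equivalently (Proposition 9 of [CFK]), it is annihilated by `g ⊗ I_η` for some
`η` supported in `x̄`. -/
def InFx (xbar : Finset (A →ₐ[k] k)) (U : Type*) [AddCommGroup U] [Module k U]
    [LieRingModule (A ⊗[k] g) U] [LieModule k (A ⊗[k] g) U] : Prop :=
  FiniteDimensional k U ∧ ∃ η : (A →ₐ[k] k) →₀ ℕ, (↑η.support : Set (A →ₐ[k] k)) ⊆ ↑xbar ∧
    ∀ z ∈ gT k A g (idealOfPt k A η), ∀ v : U, ⁅z, v⁆ = 0

/-- The finite-dimensional `(g ⊗ A)^Γ`-module `V` lies in the subcategory `F^Γ_{x̄}`: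
equivalently, it is annihilated by `(g ⊗ I_η)^Γ` for some `η` supported in `x̄`. -/
def InFxΓ (hbr : ∀ (γ : Γ) (x y : g), γ • ⁅x, y⁆ = ⁅γ • x, γ • y⁆)
    (xbar : Finset (A →ₐ[k] k)) (V : Type*) [AddCommGroup V] [Module k V]
    [LieRingModule ↥(fixedLie k A g Γ hbr) V] [LieModule k ↥(fixedLie k A g Γ hbr) V] :
    Prop :=
  FiniteDimensional k V ∧ ∃ η : (A →ₐ[k] k) →₀ ℕ, (↑η.support : Set (A →ₐ[k] k)) ⊆ ↑xbar ∧
    ∀ y : ↥(fixedLie k A g Γ hbr), (y : A ⊗[k] g) ∈ gT k A g (idealOfPt k A η) →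
      ∀ v : V, ⁅y, v⁆ = 0

/-- The multiplicity of the irreducible `V_Γ(φ)` as a composition factor of the
finite-dimensional `(g ⊗ A)^Γ`-module `M` is `m`. -/
def MultΓ (hbr : ∀ (γ : Γ) (x y : g), γ • ⁅x, y⁆ = ⁅γ • x, γ • y⁆)
    (T : TriData k g ι) (M : Type*) [AddCommGroup M] [Module k M]
    [LieRingModule ↥(fixedLie k A g Γ hbr) M] [LieModule k ↥(fixedLie k A g Γ hbr) M]
    (φ : (A →ₐ[k] k) →₀ (ι →₀ ℕ)) (m : ℕ) : Prop :=
  ∃ (n : ℕ) (F : Fin (n + 1) → LieSubmodule k ↥(fixedLie k A g Γ hbr) M)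
    (φs : Fin n → ((A →ₐ[k] k) →₀ (ι →₀ ℕ))),
    IsCompChain n F ∧
    (∀ i : Fin n, EquivariantE k A Γ (φs i) ∧
      ∃ S : LMod k ↥(fixedLie k A g Γ hbr),
        IsSimpleEvalModΓ hbr T (φs i) S.carrier ∧ FactorIso n F i S.carrier) ∧
    Nat.card {i : Fin n // φs i = φ} = m

/-- The multiplicity of the irreducible `V(φ)` as a composition factor of the
finite-dimensional `(g ⊗ A)`-module `M` is `m`. -/
def MultMod (T : TriData k g ι) (M : Type*) [AddCommGroup M] [Module k M]
    [LieRingModule (A ⊗[k] g) M] [LieModule k (A ⊗[k] g) M]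
    (φ : (A →ₐ[k] k) →₀ (ι →₀ ℕ)) (m : ℕ) : Prop :=
  ∃ (n : ℕ) (F : Fin (n + 1) → LieSubmodule k (A ⊗[k] g) M)
    (φs : Fin n → ((A →ₐ[k] k) →₀ (ι →₀ ℕ))),
    IsCompChain n F ∧
    (∀ i : Fin n, ∃ S : LMod k (A ⊗[k] g),
        IsSimpleEvalMod k A g T (φs i) S.carrier ∧ FactorIso n F i S.carrier) ∧
    Nat.card {i : Fin n // φs i = φ} = m

/-- `M` is a maximal weight `(g ⊗ A)^Γ`-module of maximal weight `ψ`: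
`mult_ψ M = 1`, and every other `φ ∈ E^Γ` occurring in `M` satisfies `ht φ < ht ψ`. -/
def IsMaxWeightΓ (hbr : ∀ (γ : Γ) (x y : g), γ • ⁅x, y⁆ = ⁅γ • x, γ • y⁆)
    (T : TriData k g ι) (M : Type*) [AddCommGroup M] [Module k M]
    [LieRingModule ↥(fixedLie k A g Γ hbr) M] [LieModule k ↥(fixedLie k A g Γ hbr) M]
    (ψ : (A →ₐ[k] k) →₀ (ι →₀ ℕ)) : Prop :=
  ∃ (n : ℕ) (F : Fin (n + 1) → LieSubmodule k ↥(fixedLie k A g Γ hbr) M)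
    (φs : Fin n → ((A →ₐ[k] k) →₀ (ι →₀ ℕ))),
    IsCompChain n F ∧
    (∀ i : Fin n, EquivariantE k A Γ (φs i) ∧
      ∃ S : LMod k ↥(fixedLie k A g Γ hbr),
        IsSimpleEvalModΓ hbr T (φs i) S.carrier ∧ FactorIso n F i S.carrier) ∧
    Nat.card {i : Fin n // φs i = ψ} = 1 ∧
    (∀ i : Fin n, φs i ≠ ψ → htE k A g Γ T (φs i) < htE k A g Γ T ψ)

/-- The context fact (Bourbaki VIII §7.2) that twisting an irreducible highest weight
`g`-module by the automorphism `γ` produces the irreducible module of highest weight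
`γ_{Out} · λ`:  this is how `Γ` acts on `P⁺`. -/
def OutCompat (T : TriData k g ι) : Prop :=
  ∀ (γ : Γ) (lam : ι →₀ ℕ) (M N : LMod k g),
    (LieModule.IsIrreducible k g M.carrier ∧ FiniteDimensional k M.carrier ∧
      ∃ v : M.carrier, v ≠ 0 ∧ (∀ n ∈ T.np, ⁅n, v⁆ = 0) ∧
        (∀ b : T.hh, ⁅(b : g), v⁆ = T.wt lam b • v)) →
    (LieModule.IsIrreducible k g N.carrier ∧ FiniteDimensional k N.carrier ∧
      ∃ v : N.carrier, v ≠ 0 ∧ (∀ n ∈ T.np, ⁅n, v⁆ = 0) ∧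
        (∀ b : T.hh, ⁅(b : g), v⁆ = T.wt (pAct γ lam) b • v)) →
    ∃ e : M.carrier ≃ₗ[k] N.carrier, ∀ (x : g) (m : M.carrier), e ⁅x, m⁆ = ⁅γ • x, e m⁆

/-!
Because `Γ` acts freely and no two points of `x̄` share an orbit, `I_η` is coprime to each of
its nontrivial translates `γ • I_η`, so the Chinese remainder theorem gives `e ∈ A` with
`e ≡ 1 mod I_η` and `e ≡ 0 mod γ • I_η` for `γ ≠ 1`. Averaging `e • z` over `Γ` produces a
`Γ`-fixed element congruent to `z` modulo `g ⊗ I_η`, so `(g ⊗ A)^Γ → (g ⊗ A) ⧸ (g ⊗ I_η)` is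
onto. Hence on a module in `F_{x̄}` every element of `g ⊗ A` acts as some fixed element, and a
module in `F^Γ_{x̄}` killed by `(g ⊗ I_η)^Γ` inflates along
`(g ⊗ A) ⧸ (g ⊗ I_η) ≃ (g ⊗ A)^Γ ⧸ (g ⊗ I_η)^Γ` to a module in `F_{x̄}`.
-/

open scoped Pointwise

theorem Ideal.exists_one_sub_mem_and_mem_smul {R G : Type*} [CommRing R] [Monoid G] [Fintype G]
    [MulSemiringAction G R] (J : Ideal R) (hJ : ∀ γ : G, γ ≠ 1 → IsCoprime J (γ • J)) :
    ∃ e : R, 1 - e ∈ J ∧ ∀ γ : G, γ ≠ 1 → e ∈ γ • J := by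
  classical
  have hco : IsCoprime J (∏ γ ∈ (Finset.univ : Finset G).erase 1, γ • J) :=
    IsCoprime.prod_right fun γ hγ => hJ γ (Finset.ne_of_mem_erase hγ)
  obtain ⟨a, ha, e, he, hae⟩ := Ideal.isCoprime_iff_exists.mp hco
  refine ⟨e, by rwa [← hae, add_sub_cancel_right], fun γ hγ => ?_⟩
  exact Ideal.prod_le_inf.trans (Finset.inf_le (Finset.mem_erase.mpr ⟨hγ, Finset.mem_univ γ⟩)) he

section Points

variable {k A Γ : Type*} [Field k] [CommRing A] [Algebra k A]

theorem AlgHom.eq_of_ker_eq {x y : A →ₐ[k] k} (h : RingHom.ker x = RingHom.ker y) : x = y := by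
  ext a
  have ha : a - algebraMap k A (x a) ∈ RingHom.ker y := by
    rw [← h]; simp [RingHom.mem_ker]
  exact (sub_eq_zero.mp (by simpa [RingHom.mem_ker] using ha)).symm

instance AlgHom.ker_isMaximal (x : A →ₐ[k] k) : (RingHom.ker x).IsMaximal :=
  RingHom.ker_isMaximal_of_surjective x fun c => ⟨algebraMap k A c, x.commutes c⟩

theorem idealOfPt_eq_prod {η : (A →ₐ[k] k) →₀ ℕ} {s : Finset (A →ₐ[k] k)} (hs : η.support ⊆ s) :
    idealOfPt k A η = ∏ x ∈ s, RingHom.ker x ^ η x :=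
  Finset.prod_subset hs fun x _ hx => by rw [Finsupp.notMem_support_iff.mp hx, pow_zero]

theorem idealOfPt_zero : idealOfPt k A 0 = ⊤ := by
  simp [idealOfPt]

theorem idealOfPt_antitone {η η' : (A →ₐ[k] k) →₀ ℕ} (h : η ≤ η') :
    idealOfPt k A η' ≤ idealOfPt k A η := by
  rw [idealOfPt_eq_prod (Finsupp.support_mono h), idealOfPt_eq_prod subset_rfl]
  exact Finset.prod_le_prod' fun x _ => Ideal.pow_le_pow_right (h x)

variable [CommGroup Γ] [MulSemiringAction Γ A] [SMulCommClass Γ k A]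

theorem pointwise_smul_ker (γ : Γ) (x : A →ₐ[k] k) :
    γ • RingHom.ker x = RingHom.ker (cdot k A Γ γ x) := by
  ext c
  rw [Ideal.mem_pointwise_smul_iff_inv_smul_mem]
  rfl

theorem isCoprime_idealOfPt_smul (hfree : ∀ γ : Γ, γ ≠ 1 → ∀ x : A →ₐ[k] k, cdot k A Γ γ x ≠ x)
    {xbar : Finset (A →ₐ[k] k)} (hxbar : NoTwoInOrbitPt k A Γ xbar) {η : (A →ₐ[k] k) →₀ ℕ}
    (hη : η.support ⊆ xbar) {γ : Γ} (hγ : γ ≠ 1) :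
    IsCoprime (idealOfPt k A η) (γ • idealOfPt k A η) := by
  rw [idealOfPt_eq_prod hη, Finset.smul_prod']
  refine IsCoprime.prod_left fun x hx => IsCoprime.prod_right fun y hy => ?_
  rw [smul_pow', pointwise_smul_ker]
  refine IsCoprime.pow (Ideal.isCoprime_of_isMaximal fun hxy => ?_)
  obtain rfl := hxbar y hy x hx γ (AlgHom.eq_of_ker_eq hxy).symm
  exact hfree γ hγ y (AlgHom.eq_of_ker_eq hxy).symm

end Points

theorem lie_eq_of_sub_lie_eq_zero {L M : Type*} [LieRing L] [AddCommGroup M] [LieRingModule L M]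
    {x y : L} {v : M} (h : ⁅x - y, v⁆ = 0) : ⁅x, v⁆ = ⁅y, v⁆ := by
  rwa [sub_lie, sub_eq_zero] at h

namespace LieSubalgebra

variable {R L : Type*} [CommRing R] [LieRing L] [LieAlgebra R L]

/-- A `K`-module `V` killed by `K ∩ I`, where `K + I = L`, viewed as an `L`-module through
`L ⧸ I ≃ K ⧸ (K ∩ I)`. -/
def InflatedModule (K : LieSubalgebra R L) (I : LieIdeal R L) (_ : ∀ x : L, ∃ w ∈ K, x - w ∈ I)
    (V : Type*) [AddCommGroup V] [LieRingModule K V]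
    (_ : ∀ y : K, (y : L) ∈ I → ∀ v : V, ⁅y, v⁆ = 0) : Type _ :=
  V

namespace InflatedModule

variable {K : LieSubalgebra R L} {I : LieIdeal R L} {hKI : ∀ x : L, ∃ w ∈ K, x - w ∈ I}
  {V : Type*} [AddCommGroup V] [LieRingModule K V]
  {hV : ∀ y : K, (y : L) ∈ I → ∀ v : V, ⁅y, v⁆ = 0}

instance : AddCommGroup (InflatedModule K I hKI V hV) := ‹AddCommGroup V›

instance [Module R V] : Module R (InflatedModule K I hKI V hV) := ‹Module R V›

theorem lie_eq_of_sub_mem (hV : ∀ y : K, (y : L) ∈ I → ∀ v : V, ⁅y, v⁆ = 0) {y y' : K}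
    (h : (y : L) - y' ∈ I) (v : V) : ⁅y, v⁆ = ⁅y', v⁆ :=
  lie_eq_of_sub_lie_eq_zero (hV (y - y') h v)

noncomputable def lift (hKI : ∀ x : L, ∃ w ∈ K, x - w ∈ I) (x : L) : K :=
  ⟨(hKI x).choose, (hKI x).choose_spec.1⟩

theorem sub_lift_mem (hKI : ∀ x : L, ∃ w ∈ K, x - w ∈ I) (x : L) : x - lift hKI x ∈ I :=
  (hKI x).choose_spec.2

noncomputable def act (hKI : ∀ x : L, ∃ w ∈ K, x - w ∈ I) (x : L) (v : V) : V :=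
  ⁅lift hKI x, v⁆

theorem act_eq (hV : ∀ y : K, (y : L) ∈ I → ∀ v : V, ⁅y, v⁆ = 0) {x : L} (w : K)
    (h : x - w ∈ I) (v : V) : act hKI x v = ⁅w, v⁆ := by
  refine lie_eq_of_sub_mem hV ?_ v
  simpa using I.sub_mem h (sub_lift_mem hKI x)

theorem add_act (hV : ∀ y : K, (y : L) ∈ I → ∀ v : V, ⁅y, v⁆ = 0) (x y : L) (v : V) :
    act hKI (x + y) v = act hKI x v + act hKI y v := by
  have h : x + y - ((lift hKI x + lift hKI y : K) : L) ∈ I := by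
    simpa [add_sub_add_comm] using I.add_mem (sub_lift_mem hKI x) (sub_lift_mem hKI y)
  rw [act_eq hV _ h, add_lie]
  rfl

theorem act_add (x : L) (u v : V) : act hKI x (u + v) = act hKI x u + act hKI x v :=
  lie_add _ u v

theorem act_act (hV : ∀ y : K, (y : L) ∈ I → ∀ v : V, ⁅y, v⁆ = 0) (x y : L) (v : V) :
    act hKI x (act hKI y v) = act hKI ⁅x, y⁆ v + act hKI y (act hKI x v) := by
  have h : ⁅x, y⁆ - ((⁅lift hKI x, lift hKI y⁆ : K) : L) ∈ I := by
    have := I.add_mem (lie_mem_left R L I _ y (sub_lift_mem hKI x))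
      (lie_mem_right R L I (lift hKI x : L) _ (sub_lift_mem hKI y))
    rwa [sub_lie, lie_sub, sub_add_sub_cancel, ← LieSubalgebra.coe_bracket] at this
  rw [act_eq hV _ h]
  exact leibniz_lie _ _ v

theorem smul_act [Module R V] [LieModule R K V] (hV : ∀ y : K, (y : L) ∈ I → ∀ v : V, ⁅y, v⁆ = 0)
    (c : R) (x : L) (v : V) : act hKI (c • x) v = c • act hKI x v := by
  have h : c • x - ((c • lift hKI x : K) : L) ∈ I := by
    simpa [smul_sub] using I.smul_mem c (sub_lift_mem hKI x)
  rw [act_eq hV _ h, smul_lie]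
  rfl

theorem act_smul [Module R V] [LieModule R K V] (c : R) (x : L) (v : V) :
    act hKI x (c • v) = c • act hKI x v :=
  lie_smul c _ v

instance : LieRingModule L (InflatedModule K I hKI V hV) where
  bracket x v := act (V := V) hKI x v
  add_lie := add_act (V := V) hV
  lie_add := act_add (V := V)
  leibniz_lie := act_act (V := V) hV

instance [Module R V] [LieModule R K V] : LieModule R L (InflatedModule K I hKI V hV) where
  smul_lie := smul_act (V := V) hV
  lie_smul := act_smul (V := V)

theorem lie_eq_zero_of_mem {x : L} (hx : x ∈ I) (v : InflatedModule K I hKI V hV) :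
    ⁅x, v⁆ = 0 :=
  (act_eq (V := V) hV 0 (by simpa using hx) v).trans (zero_lie (L := K) (M := V) v)

def equiv [Module R V] [LieModule R K V] : InflatedModule K I hKI V hV ≃ₗ⁅R,K⁆ V :=
  { LinearEquiv.refl R V with
    map_lie' := fun {y} v => act_eq (V := V) hV y (by simp) v }

end InflatedModule

end LieSubalgebra

theorem gT_mono {I J : Ideal A} (h : I ≤ J) : gT k A g I ≤ gT k A g J :=
  Submodule.span_mono fun _ ⟨f, hf, v, hz⟩ => ⟨f, h hf, v, hz⟩

theorem gT_top : gT k A g ⊤ = ⊤ := by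
  rw [eq_top_iff, ← TensorProduct.span_tmul_eq_top k A g]
  exact Submodule.span_le.mpr fun _ ⟨a, v, hz⟩ => Submodule.subset_span ⟨a, trivial, v, hz.symm⟩

theorem smul_mem_gT_of_mem {I : Ideal A} {c : A} (hc : c ∈ I) (z : A ⊗[k] g) :
    c • z ∈ gT k A g I := by
  induction z using TensorProduct.induction_on with
  | zero => rw [smul_zero]; exact Submodule.zero_mem _
  | tmul a v =>
    rw [TensorProduct.smul_tmul']
    exact Submodule.subset_span ⟨c * a, I.mul_mem_right a hc, v, rfl⟩
  | add z₁ z₂ h₁ h₂ => rw [smul_add]; exact Submodule.add_mem _ h₁ h₂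

theorem smul_mem_gT {I : Ideal A} (c : A) {z : A ⊗[k] g} (hz : z ∈ gT k A g I) :
    c • z ∈ gT k A g I := by
  induction hz using Submodule.span_induction with
  | mem z hz =>
    obtain ⟨f, hf, v, rfl⟩ := hz
    rw [TensorProduct.smul_tmul']
    exact Submodule.subset_span ⟨c * f, I.mul_mem_left c hf, v, rfl⟩
  | zero => rw [smul_zero]; exact Submodule.zero_mem _
  | add z₁ z₂ _ _ h₁ h₂ => rw [smul_add]; exact Submodule.add_mem _ h₁ h₂
  | smul t z _ h => rw [smul_comm]; exact Submodule.smul_mem _ t h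

theorem diagMap_tmul (γ : Γ) (a : A) (v : g) :
    diagMap k A g Γ γ (a ⊗ₜ[k] v) = (γ • a) ⊗ₜ[k] (γ • v) :=
  rfl

theorem diagMap_diagMap (γ γ' : Γ) (z : A ⊗[k] g) :
    diagMap k A g Γ γ (diagMap k A g Γ γ' z) = diagMap k A g Γ (γ * γ') z := by
  induction z using TensorProduct.induction_on with
  | zero => simp
  | tmul a v => simp [diagMap_tmul, mul_smul]
  | add z₁ z₂ h₁ h₂ => simp only [map_add, h₁, h₂]

theorem diagMap_one (z : A ⊗[k] g) : diagMap k A g Γ 1 z = z := by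
  induction z using TensorProduct.induction_on with
  | zero => simp
  | tmul a v => simp [diagMap_tmul]
  | add z₁ z₂ h₁ h₂ => simp only [map_add, h₁, h₂]

theorem diagMap_smul (γ : Γ) (c : A) (z : A ⊗[k] g) :
    diagMap k A g Γ γ (c • z) = (γ • c) • diagMap k A g Γ γ z := by
  induction z using TensorProduct.induction_on with
  | zero => simp
  | tmul a v => simp only [TensorProduct.smul_tmul', diagMap_tmul, smul_eq_mul, smul_mul']
  | add z₁ z₂ h₁ h₂ => rw [smul_add, map_add, h₁, h₂, map_add, smul_add]

theorem sum_diagMap_mem_fixedSub (z : A ⊗[k] g) :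
    ∑ γ : Γ, diagMap k A g Γ γ z ∈ fixedSub k A g Γ := by
  rw [mem_fixedSub]
  intro γ
  simp_rw [map_sum, diagMap_diagMap]
  exact Fintype.sum_equiv (Equiv.mulLeft γ) _ _ fun _ => rfl

theorem exists_fixed_mem_gT_sub_mem_gT
    (hfree : ∀ γ : Γ, γ ≠ 1 → ∀ x : A →ₐ[k] k, cdot k A Γ γ x ≠ x)
    {xbar : Finset (A →ₐ[k] k)} (hxbar : NoTwoInOrbitPt k A Γ xbar)
    {η η' : (A →ₐ[k] k) →₀ ℕ} (hle : η ≤ η') (hη' : η'.support ⊆ xbar)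
    {z : A ⊗[k] g} (hz : z ∈ gT k A g (idealOfPt k A η)) :
    ∃ w ∈ fixedSub k A g Γ, w ∈ gT k A g (idealOfPt k A η) ∧
      z - w ∈ gT k A g (idealOfPt k A η') := by
  classical
  set J := idealOfPt k A η'
  obtain ⟨e, he₁, he⟩ := Ideal.exists_one_sub_mem_and_mem_smul J fun γ hγ =>
    isCoprime_idealOfPt_smul hfree hxbar hη' hγ
  have hterm : ∀ γ : Γ, γ ≠ 1 → diagMap k A g Γ γ (e • z) ∈ gT k A g J := fun γ hγ => by
    rw [diagMap_smul]
    exact smul_mem_gT_of_mem (Ideal.mem_inv_pointwise_smul_iff.mp (he γ⁻¹ (inv_ne_one.mpr hγ))) _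
  have hsplit : ∑ γ : Γ, diagMap k A g Γ γ (e • z) =
      e • z + ∑ γ ∈ Finset.univ.erase 1, diagMap k A g Γ γ (e • z) := by
    rw [← Finset.add_sum_erase _ _ (Finset.mem_univ 1), diagMap_one]
  refine ⟨_, sum_diagMap_mem_fixedSub (e • z), ?_, ?_⟩
  · rw [hsplit]
    refine Submodule.add_mem _ (smul_mem_gT e hz) (Submodule.sum_mem _ fun γ hγ => ?_)
    exact gT_mono (idealOfPt_antitone hle) (hterm γ (Finset.ne_of_mem_erase hγ))
  · have hdiff : z - e • z = (1 - e) • z := by rw [sub_smul, one_smul]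
    rw [hsplit, sub_add_eq_sub_sub, hdiff]
    exact Submodule.sub_mem _ (smul_mem_gT_of_mem he₁ z)
      (Submodule.sum_mem _ fun γ hγ => hterm γ (Finset.ne_of_mem_erase hγ))

theorem exists_fixed_sub_mem_gT
    (hfree : ∀ γ : Γ, γ ≠ 1 → ∀ x : A →ₐ[k] k, cdot k A Γ γ x ≠ x)
    {xbar : Finset (A →ₐ[k] k)} (hxbar : NoTwoInOrbitPt k A Γ xbar)
    {η : (A →ₐ[k] k) →₀ ℕ} (hη : η.support ⊆ xbar) (z : A ⊗[k] g) :
    ∃ w ∈ fixedSub k A g Γ, z - w ∈ gT k A g (idealOfPt k A η) := by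
  have hz : z ∈ gT k A g (idealOfPt k A 0) := by
    rw [idealOfPt_zero, gT_top]; trivial
  obtain ⟨w, hw, -, hzw⟩ := exists_fixed_mem_gT_sub_mem_gT hfree hxbar zero_le hη hz
  exact ⟨w, hw, hzw⟩

theorem lie_eq_zero_of_mem_gT
    (hfree : ∀ γ : Γ, γ ≠ 1 → ∀ x : A →ₐ[k] k, cdot k A Γ γ x ≠ x)
    {xbar : Finset (A →ₐ[k] k)} (hxbar : NoTwoInOrbitPt k A Γ xbar)
    {hbr : ∀ (γ : Γ) (x y : g), γ • ⁅x, y⁆ = ⁅γ • x, γ • y⁆}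
    {U : Type*} [AddCommGroup U] [LieRingModule (A ⊗[k] g) U]
    {η₀ η : (A →ₐ[k] k) →₀ ℕ} (hη₀ : η₀.support ⊆ xbar) (hη : η.support ⊆ xbar)
    (hU : ∀ z ∈ gT k A g (idealOfPt k A η₀), ∀ v : U, ⁅z, v⁆ = 0)
    (hfix : ∀ y : fixedLie k A g Γ hbr, (y : A ⊗[k] g) ∈ gT k A g (idealOfPt k A η) →
      ∀ v : U, ⁅y, v⁆ = 0)
    {z : A ⊗[k] g} (hz : z ∈ gT k A g (idealOfPt k A η)) (v : U) : ⁅z, v⁆ = 0 := by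
  classical
  obtain ⟨w, hw, hwη, hzw⟩ := exists_fixed_mem_gT_sub_mem_gT hfree hxbar le_self_add
    (Finsupp.support_add.trans (Finset.union_subset hη hη₀)) hz
  have hzw₀ : ⁅z - w, v⁆ = 0 := hU _ (gT_mono (idealOfPt_antitone le_add_self) hzw) v
  have hw₀ : ⁅w, v⁆ = 0 := hfix ⟨w, hw⟩ hwη v
  rw [← sub_add_cancel z w, add_lie, hzw₀, hw₀, add_zero]

theorem LieModuleHom.map_lie_of_gT_annihilates
    (hfree : ∀ γ : Γ, γ ≠ 1 → ∀ x : A →ₐ[k] k, cdot k A Γ γ x ≠ x)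
    {xbar : Finset (A →ₐ[k] k)} (hxbar : NoTwoInOrbitPt k A Γ xbar)
    {hbr : ∀ (γ : Γ) (x y : g), γ • ⁅x, y⁆ = ⁅γ • x, γ • y⁆}
    {U U' : Type*} [AddCommGroup U] [Module k U] [LieRingModule (A ⊗[k] g) U]
    [AddCommGroup U'] [Module k U'] [LieRingModule (A ⊗[k] g) U']
    {η η' : (A →ₐ[k] k) →₀ ℕ} (hη : η.support ⊆ xbar) (hη' : η'.support ⊆ xbar)
    (hU : ∀ z ∈ gT k A g (idealOfPt k A η), ∀ v : U, ⁅z, v⁆ = 0)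
    (hU' : ∀ z ∈ gT k A g (idealOfPt k A η'), ∀ v : U', ⁅z, v⁆ = 0)
    (f : U →ₗ⁅k,fixedLie k A g Γ hbr⁆ U') (x : A ⊗[k] g) (v : U) : f ⁅x, v⁆ = ⁅x, f v⁆ := by
  classical
  obtain ⟨w, hw, hxw⟩ := exists_fixed_sub_mem_gT hfree hxbar
    (Finsupp.support_add.trans (Finset.union_subset hη hη')) x
  have hv : ⁅x, v⁆ = ⁅w, v⁆ :=
    lie_eq_of_sub_lie_eq_zero (hU _ (gT_mono (idealOfPt_antitone le_self_add) hxw) v)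
  have hfv : ⁅x, f v⁆ = ⁅w, f v⁆ :=
    lie_eq_of_sub_lie_eq_zero (hU' _ (gT_mono (idealOfPt_antitone le_add_self) hxw) (f v))
  rw [hv, hfv]
  exact f.map_lie ⟨w, hw⟩ v

/-- The first conjunct is `U_{x̄} ∘ T_{x̄} = id`, the second `T_{x̄} ∘ U_{x̄} = id` (up to the
identity isomorphism), and the third says that both functors are the identity on morphisms. -/
theorem statement9
    (hbr : ∀ (γ : Γ) (x y : g), γ • ⁅x, y⁆ = ⁅γ • x, γ • y⁆)
    (hfree : ∀ γ : Γ, γ ≠ 1 → ∀ x : A →ₐ[k] k, cdot k A Γ γ x ≠ x)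
    (xbar : Finset (A →ₐ[k] k)) (hxbar : NoTwoInOrbitPt k A Γ xbar) :
    (∀ (U : Type (max u1 u2 u3)) [AddCommGroup U] [Module k U]
      [LieRingModule (A ⊗[k] g) U] [LieModule k (A ⊗[k] g) U],
      InFx (g := g) xbar U →
        (InFxΓ hbr xbar U ∧
          ∀ η : (A →ₐ[k] k) →₀ ℕ, (↑η.support : Set (A →ₐ[k] k)) ⊆ ↑xbar →
            (∀ y : ↥(fixedLie k A g Γ hbr),
                (y : A ⊗[k] g) ∈ gT k A g (idealOfPt k A η) → ∀ v : U, ⁅y, v⁆ = 0) →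
            ∀ (x : A ⊗[k] g) (y : ↥(fixedLie k A g Γ hbr)),
              (y : A ⊗[k] g) - x ∈ gT k A g (idealOfPt k A η) →
                ∀ v : U, ⁅(y : A ⊗[k] g), v⁆ = ⁅x, v⁆)) ∧
    (∀ (V : Type (max u1 u2 u3)) [AddCommGroup V] [Module k V]
      [LieRingModule ↥(fixedLie k A g Γ hbr) V] [LieModule k ↥(fixedLie k A g Γ hbr) V],
      InFxΓ hbr xbar V →
        ∃ U : LMod k (A ⊗[k] g), InFx (g := g) xbar U.carrier ∧
          Nonempty (U.carrier ≃ₗ⁅k,↥(fixedLie k A g Γ hbr)⁆ V)) ∧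
    (∀ (U U' : Type (max u1 u2 u3)) [AddCommGroup U] [Module k U]
      [LieRingModule (A ⊗[k] g) U] [LieModule k (A ⊗[k] g) U]
      [AddCommGroup U'] [Module k U'] [LieRingModule (A ⊗[k] g) U']
      [LieModule k (A ⊗[k] g) U'],
      InFx (g := g) xbar U → InFx (g := g) xbar U' →
        ∀ f : U →ₗ⁅k,↥(fixedLie k A g Γ hbr)⁆ U',
          ∀ (x : A ⊗[k] g) (v : U), f ⁅x, v⁆ = ⁅x, f v⁆) := by
  refine ⟨fun U _ _ _ _ ⟨hfd, η₀, hη₀, hU⟩ => ⟨?_, ?_⟩, fun V _ _ _ _ ⟨hfd, η, hη, hV⟩ => ?_,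
    fun U U' _ _ _ _ _ _ _ _ ⟨_, η, hη, hU⟩ ⟨_, η', hη', hU'⟩ =>
      LieModuleHom.map_lie_of_gT_annihilates hfree hxbar hη hη' hU hU'⟩
  · exact ⟨hfd, η₀, hη₀, fun y hy v => hU y hy v⟩
  · exact fun η hη hfix x y hyx v =>
      lie_eq_of_sub_lie_eq_zero (lie_eq_zero_of_mem_gT hfree hxbar hη₀ hη hU hfix hyx v)
  · have hKI : ∀ x : A ⊗[k] g, ∃ w ∈ fixedLie k A g Γ hbr,
        x - w ∈ gTLie k A g (idealOfPt k A η) :=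
      exists_fixed_sub_mem_gT hfree hxbar hη
    -- stated through `gTLie` so that the instances on `InflatedModule` unify
    have hV : ∀ y : fixedLie k A g Γ hbr, (y : A ⊗[k] g) ∈ gTLie k A g (idealOfPt k A η) →
        ∀ v : V, ⁅y, v⁆ = 0 := hV
    exact ⟨⟨LieSubalgebra.InflatedModule _ (gTLie k A g _) hKI V hV⟩,
      ⟨hfd, η, hη, fun z hz => LieSubalgebra.InflatedModule.lie_eq_zero_of_mem (V := V) hz⟩,
      ⟨LieSubalgebra.InflatedModule.equiv (V := V) (hV := hV)⟩⟩
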